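/- Suppose F is a sheaf of abelian groups on 𝒳/S which is representable by a scheme affine and of finite type over S. If there exists a structure of O-module on F (extending the given abelian group structure), then this structure is unique. Moreover, if F and G are two such sheaves equipped with O-module structures and a: F → G is a morphism of sheaves of abelian groups, then a is automatically a morphism of O-modules. -/

import Mathlib

open CategoryTheory CategoryTheory.Limits AlgebraicGeometry Opposite

universe u

namespace Simpson

variable {S : Scheme.{u}}

/-- The category of presheaves of sets on the site `𝒳/S` of schemes over `S`. -/
abbrev PSh (S : Scheme.{u}) := (Over S)ᵒᵖ ⥤ Type u

/-- The presheaf on `𝒳/S` represented by a scheme `X` over `S`. -/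
abbrev ySh (X : Over S) : PSh S := yoneda.obj X

/-- A sieve on an `S`-scheme is an étale covering sieve iff it contains a jointly
surjective family of étale morphisms.  These are exactly the covering sieves of the
big étale topology on `𝒳/S`. -/
def EtCov {A : Over S} (R : Sieve A) : Prop :=
  ∃ (ι : Type u) (B : ι → Over S) (g : ∀ i, B i ⟶ A),
    (∀ i, IsEtale (g i).left) ∧
    (∀ x : A.left, ∃ (i : ι) (y : (B i).left), ((g i).left).base y = x) ∧
    (∀ i, R.arrows (g i))

/-- A presheaf is a sheaf for the big étale topology iff it satisfies the sheaf
condition for every étale covering sieve. -/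
def IsEtaleSheaf (F : PSh S) : Prop :=
  ∀ ⦃A : Over S⦄ (R : Sieve A), EtCov R → Presieve.IsSheafFor F R.arrows

/-- The sieve of arrows over which a given section `s` of the target lifts through `f`. -/
def imSieve {F G : PSh S} (f : F ⟶ G) {A : Over S} (s : G.obj (op A)) : Sieve A where
  arrows B φ := ∃ t : F.obj (op B), f.app (op B) t = G.map φ.op s
  downward_closed := by
    rintro B C φ ⟨t, ht⟩ ψ
    refine ⟨F.map ψ.op t, ?_⟩
    rw [FunctorToTypes.naturality, ht, ← FunctorToTypes.map_comp_apply]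
    rfl

/-- A morphism of (pre)sheaves is surjective (an epimorphism of étale sheaves) iff it is
locally surjective for the étale topology. -/
def LocSurj {F G : PSh S} (f : F ⟶ G) : Prop :=
  ∀ ⦃A : Over S⦄ (s : G.obj (op A)), EtCov (imSieve f s)

/-- Finite type morphisms of schemes (quasi-compact and locally of finite type). -/
def FinTypeMor {X Y : Scheme.{u}} (f : X ⟶ Y) : Prop :=
  LocallyOfFiniteType f ∧ QuasiCompact f

/-- The fibre product of two morphisms of presheaves of sets. -/
def pbk {F G H : PSh S} (f : F ⟶ H) (g : G ⟶ H) : PSh S where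
  obj A := { p : F.obj A × G.obj A // f.app A p.1 = g.app A p.2 }
  map φ := TypeCat.ofHom fun p => ⟨(F.map φ p.1.1, G.map φ p.1.2), by
    rw [FunctorToTypes.naturality, FunctorToTypes.naturality, p.2]⟩
  map_id A := by
    ext p <;> simp
  map_comp φ ψ := by
    ext p <;> simp

/-- Condition P1: there is a surjection from a scheme of finite type over `S`. -/
def P1 (F : PSh S) : Prop :=
  ∃ (X : Over S) (p : ySh X ⟶ F), FinTypeMor X.hom ∧ LocSurj p

/-- Condition P2: there are surjections `X → F` and `Y → X ×_F X` with `X`, `Y`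
schemes of finite type over `S`. -/
def P2 (F : PSh S) : Prop :=
  ∃ (X : Over S) (p : ySh X ⟶ F), FinTypeMor X.hom ∧ LocSurj p ∧
    ∃ (Y : Over S) (q : ySh Y ⟶ pbk p p), FinTypeMor Y.hom ∧ LocSurj q

/-- A sheaf of groups on `𝒳/S`: a presheaf of groups. -/
abbrev GSh (S : Scheme.{u}) := (Over S)ᵒᵖ ⥤ GrpCat.{u}

/-- Underlying presheaf of sets of a presheaf of groups. -/
abbrev uG (G : GSh S) : PSh S := G ⋙ forget GrpCat

/-- An action of a sheaf of groups `G` on a sheaf of sets `F` (a morphism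
`G × F → F` satisfying the usual axioms, written pointwise). -/
structure GAction (G : GSh S) (F : PSh S) where
  act : ∀ (A : (Over S)ᵒᵖ), G.obj A → F.obj A → F.obj A
  one_act : ∀ A x, act A 1 x = x
  mul_act : ∀ A g h x, act A (g * h) x = act A g (act A h x)
  nat : ∀ {A B : (Over S)ᵒᵖ} (φ : A ⟶ B) g x,
    F.map φ (act A g x) = act B (G.map φ g) (F.map φ x)

/-- The sieve of arrows over which two sections of `F` become related by the action
of `G`. -/
def orbitSieve {G : GSh S} {F : PSh S} (ρ : GAction G F) {A : Over S}
    (x y : F.obj (op A)) : Sieve A where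
  arrows B φ := ∃ g : G.obj (op B), ρ.act (op B) g (F.map φ.op y) = F.map φ.op x
  downward_closed := by
    rintro B C φ ⟨g, hg⟩ ψ
    refine ⟨G.map ψ.op g, ?_⟩
    have hy : F.map (ψ ≫ φ).op y = F.map ψ.op (F.map φ.op y) := by
      rw [op_comp, FunctorToTypes.map_comp_apply]
    rw [hy, ← ρ.nat, hg, ← FunctorToTypes.map_comp_apply, ← op_comp]

/-- `(Q, q)` realises the quotient sheaf `F/G`: `q` is `G`-invariant, locally
surjective, and `G × F` covers `F ×_Q F` (so that `Q` is exactly the sheafification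
of the presheaf quotient `Y ↦ F(Y)/G(Y)`). -/
structure IsQuotientBy {G : GSh S} {F : PSh S} (ρ : GAction G F)
    (Q : PSh S) (q : F ⟶ Q) : Prop where
  sheaf : IsEtaleSheaf Q
  inv : ∀ (A : (Over S)ᵒᵖ) (g : G.obj A) (x : F.obj A), q.app A (ρ.act A g x) = q.app A x
  surj : LocSurj q
  cover : ∀ (A : Over S) (x y : F.obj (op A)),
    q.app (op A) x = q.app (op A) y → EtCov (orbitSieve ρ x y)

/-- Global sections of the structure sheaf of a scheme. -/
abbrev GammaO (X : Scheme.{u}) : Type u := Scheme.Γ.obj (op X)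

/-- Sections of the structure sheaf `O` over an object of `𝒳/S`. -/
abbrev Osec (A : Over S) : Type u := GammaO A.left

/-- Restriction of sections of `O` along a morphism of `(𝒳/S)ᵒᵖ`. -/
abbrev Ores {A B : (Over S)ᵒᵖ} (φ : A ⟶ B) : Osec A.unop → Osec B.unop :=
  Scheme.Γ.map (φ.unop.left.op)

/-- A structure of `O`-module on a presheaf of abelian groups on `𝒳/S`. -/
structure OModuleStr (F : (Over S)ᵒᵖ ⥤ AddCommGrpCat.{u}) where
  smul : ∀ (A : (Over S)ᵒᵖ), Osec A.unop → F.obj A → F.obj A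
  one_smul : ∀ A x, smul A 1 x = x
  mul_smul : ∀ A r s x, smul A (r * s) x = smul A r (smul A s x)
  smul_add : ∀ A r x y, smul A r (x + y) = smul A r x + smul A r y
  add_smul : ∀ A r s x, smul A (r + s) x = smul A r x + smul A s x
  nat : ∀ {A B : (Over S)ᵒᵖ} (φ : A ⟶ B) r x,
    F.map φ (smul A r x) = smul B (Ores φ r) (F.map φ x)

/-- A vector scheme over `S`: a sheaf of `O`-modules which, étale-locally on `S`, is
representable by a scheme affine and of finite type over the base. -/
def IsVectorScheme (F : (Over S)ᵒᵖ ⥤ AddCommGrpCat.{u}) : Prop :=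
  IsEtaleSheaf (F ⋙ forget AddCommGrpCat) ∧ Nonempty (OModuleStr F) ∧
  ∃ (ι : Type u) (T : ι → Scheme.{u}) (g : ∀ a, T a ⟶ S),
    (∀ a, IsEtale (g a)) ∧
    (∀ s : S, ∃ (a : ι) (t : T a), (g a).base t = s) ∧
    ∀ a, ∃ (X : Over (T a)), IsAffineHom X.hom ∧ FinTypeMor X.hom ∧
      Nonempty (((Over.map (g a)).op ⋙ F ⋙ forget AddCommGrpCat) ≅ yoneda.obj X)

/-- A vector sheaf over `S`: a sheaf of abelian groups which, étale-locally on `S`,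
admits an exact presentation `U → V → F → 0` by vector schemes. -/
def IsVectorSheaf (F : (Over S)ᵒᵖ ⥤ AddCommGrpCat.{u}) : Prop :=
  IsEtaleSheaf (F ⋙ forget AddCommGrpCat) ∧
  ∃ (ι : Type u) (T : ι → Scheme.{u}) (g : ∀ a, T a ⟶ S),
    (∀ a, IsEtale (g a)) ∧
    (∀ s : S, ∃ (a : ι) (t : T a), (g a).base t = s) ∧
    ∀ a, ∃ (U V : (Over (T a))ᵒᵖ ⥤ AddCommGrpCat.{u}),
      IsVectorScheme U ∧ IsVectorScheme V ∧
      ∃ (i : U ⟶ V) (p : V ⟶ (Over.map (g a)).op ⋙ F),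
        (∀ (A : (Over (T a))ᵒᵖ) (x : U.obj A), p.app A (i.app A x) = 0) ∧
        (∀ (A : Over (T a)) (x : V.obj (op A)), p.app (op A) x = 0 →
          EtCov (imSieve (Functor.whiskerRight i (forget AddCommGrpCat)) x)) ∧
        LocSurj (Functor.whiskerRight p (forget AddCommGrpCat))

/-- `Spec` of a `u`-small commutative ring. -/
noncomputable abbrev SpecOf (B : Type u) [CommRing B] : Scheme.{u} :=
  Spec (CommRingCat.of B)


open Polynomial in
/-- A polynomial over a ring in which all positive integers are invertible,
vanishing at all natural numbers, is zero. -/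
theorem eval_nat_zero_imp_zero {R : Type*} [CommRing R]
    (hn : ∀ n : ℕ, n ≠ 0 → IsUnit (n : R)) :
    ∀ (d : ℕ) (p : R[X]), p.natDegree ≤ d → (∀ n : ℕ, p.eval (n : R) = 0) → p = 0 := by
  intro d
  induction d with
  | zero =>
    intro p hd hev
    have : p = C (p.coeff 0) := Polynomial.eq_C_of_natDegree_le_zero hd
    have h0 := hev 0
    rw [this] at h0 ⊢
    simp only [Nat.cast_zero, eval_C] at h0
    rw [h0, map_zero]
  | succ d ih =>
    intro p hd hev
    nontriviality R
    have h0 : p.coeff 0 = 0 := by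
      have := hev 0
      rwa [Nat.cast_zero, ← Polynomial.coeff_zero_eq_eval_zero] at this
    obtain ⟨q, rfl⟩ : X ∣ p := Polynomial.X_dvd_iff.mpr h0
    rcases eq_or_ne q 0 with rfl | hq
    · simp
    have hqd : q.natDegree ≤ d := by
      have := Polynomial.natDegree_X_mul hq
      omega
    have hqev : ∀ n : ℕ, q.eval ((n : R) + 1) = 0 := by
      intro n
      have := hev (n + 1)
      rw [Polynomial.eval_mul, Polynomial.eval_X] at this
      have hu : IsUnit ((n + 1 : ℕ) : R) := hn (n + 1) (Nat.succ_ne_zero n)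
      push_cast at this hu ⊢
      exact (hu.mul_right_eq_zero).mp this
    have hcomp : q.comp (X + 1) = 0 := by
      refine ih (q.comp (X + 1)) ?_ ?_
      · calc (q.comp (X + 1)).natDegree ≤ q.natDegree * (X + (1:R[X])).natDegree :=
              Polynomial.natDegree_comp_le
          _ ≤ d * 1 := by
              refine Nat.mul_le_mul hqd ?_
              have : (X + (1:R[X])) = X + C 1 := by simp
              rw [this, Polynomial.natDegree_X_add_C]
          _ ≤ d := by omega
      · intro n
        rw [Polynomial.eval_comp, Polynomial.eval_add, Polynomial.eval_X, Polynomial.eval_one]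
        exact hqev n
    have : q = 0 := by
      have h2 : (q.comp (X + 1)).comp (X - 1) = q := by
        rw [Polynomial.comp_assoc]
        simp
      rw [hcomp, Polynomial.zero_comp] at h2
      exact h2.symm
    rw [this, mul_zero]

open Polynomial in
theorem mv_eval_nat_inj {R : Type*} [CommRing R]
    (hn : ∀ n : ℕ, n ≠ 0 → IsUnit (n : R)) (p p' : MvPolynomial PUnit.{u+1} R)
    (h : ∀ n : ℕ, MvPolynomial.eval (fun _ => (n : R)) p
        = MvPolynomial.eval (fun _ => (n : R)) p') : p = p' := by
  have key : ∀ (c : R) (r : MvPolynomial PUnit.{u+1} R),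
      ((MvPolynomial.pUnitAlgEquiv R) r).eval c = MvPolynomial.eval (fun _ => c) r := by
    intro c r
    have hc : ((Polynomial.evalRingHom c).comp
        ((MvPolynomial.pUnitAlgEquiv R : MvPolynomial PUnit.{u+1} R ≃ₐ[R] R[X]) :
          MvPolynomial PUnit.{u+1} R →+* R[X]))
        = (MvPolynomial.eval (fun _ => c) : MvPolynomial PUnit.{u+1} R →+* R) := by
      apply MvPolynomial.ringHom_ext <;> intro a <;> simp
    exact DFunLike.congr_fun hc r
  set q := (MvPolynomial.pUnitAlgEquiv R) (p - p') with hq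
  have hq0 : q = 0 := by
    refine eval_nat_zero_imp_zero hn q.natDegree q le_rfl ?_
    intro n
    rw [hq, key, map_sub, sub_eq_zero]
    exact h n
  have hsub : p - p' = 0 := by
    apply (MvPolynomial.pUnitAlgEquiv R).injective
    rw [map_zero, ← hq, hq0]
  exact sub_eq_zero.mp hsub


noncomputable abbrev A1 (U : Scheme.{u}) : Scheme.{u} := AffineSpace.{u} PUnit.{u+1} U

noncomputable def sigmaC (U : Scheme.{u}) (c : Γ(U, ⊤)) : U ⟶ A1 U :=
  AffineSpace.homOfVector (𝟙 U) (fun _ => c)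

@[simp] lemma sigmaC_over (U : Scheme.{u}) (c : Γ(U, ⊤)) :
    sigmaC U c ≫ (A1 U ↘ U) = 𝟙 U := AffineSpace.homOfVector_over _ _

@[simp] lemma sigmaC_coord (U : Scheme.{u}) (c : Γ(U, ⊤)) (i : PUnit.{u+1}) :
    (sigmaC U c).appTop (AffineSpace.coord U i) = c :=
  AffineSpace.homOfVector_appTop_coord _ _ _

/-- The square defining functoriality of the affine line is a pullback. -/
lemma isPullback_A1_map {U V : Scheme.{u}} (f : U ⟶ V) :
    IsPullback (AffineSpace.map PUnit.{u+1} f) (A1 U ↘ U) (A1 V ↘ V) f := by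
  have PU : IsPullback (A1 U ↘ U) (AffineSpace.toSpecMvPoly PUnit.{u+1} U)
      (terminal.from U) (terminal.from (Spec (CommRingCat.of (MvPolynomial PUnit.{u+1} (ULift ℤ))))) := by
    exact IsPullback.of_hasPullback _ _
  have PV : IsPullback (A1 V ↘ V) (AffineSpace.toSpecMvPoly PUnit.{u+1} V)
      (terminal.from V) (terminal.from (Spec (CommRingCat.of (MvPolynomial PUnit.{u+1} (ULift ℤ))))) := by
    exact IsPullback.of_hasPullback _ _
  refine IsPullback.of_right ?_ (AffineSpace.map_over f) PV.flip
  have h1 : AffineSpace.map PUnit.{u+1} f ≫ AffineSpace.toSpecMvPoly PUnit.{u+1} V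
      = AffineSpace.toSpecMvPoly PUnit.{u+1} U := by
    rw [AffineSpace.map, AffineSpace.homOfVector_toSpecMvPoly]
    apply (AffineSpace.toSpecMvPolyIntEquiv PUnit.{u+1}).injective
    rw [Equiv.apply_symm_apply]
    rfl
  have h2 : f ≫ terminal.from V = terminal.from U := terminal.hom_ext _ _
  rw [h1, h2]
  exact PU.flip

lemma isOpenImmersion_A1_map {U V : Scheme.{u}} (f : U ⟶ V) [IsOpenImmersion f] :
    IsOpenImmersion (AffineSpace.map PUnit.{u+1} f) := by
  have h := isPullback_A1_map f
  rw [show AffineSpace.map PUnit.{u+1} f = h.isoPullback.hom ≫ pullback.fst _ _ from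
    (h.isoPullback_hom_fst).symm]
  infer_instance

/-- Points of the affine line over an open lying over points of the open. -/
lemma exists_A1_map_preimage {V : Scheme.{u}} (U : V.Opens) (b : A1 V)
    (hb : (A1 V ↘ V).base b ∈ U) :
    ∃ z : A1 U.toScheme, (AffineSpace.map PUnit.{u+1} U.ι).base z = b := by
  have h := isPullback_A1_map (U := U.toScheme) U.ι
  obtain ⟨u, hu⟩ : ∃ u : U.toScheme, U.ι.base u = (A1 V ↘ V).base b := by
    have : (A1 V ↘ V).base b ∈ Set.range U.ι.base := by
      rw [Scheme.Opens.range_ι]; exact hb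
    exact this.imp (fun u hu => hu)
  obtain ⟨z, hz1, hz2⟩ := Scheme.Pullback.exists_preimage_pullback
    (f := (A1 V ↘ V)) (g := U.ι) b u hu.symm
  refine ⟨h.isoPullback.inv.base z, ?_⟩
  have : h.isoPullback.inv ≫ AffineSpace.map PUnit.{u+1} U.ι
      = pullback.fst (A1 V ↘ V) U.ι := by
    rw [Iso.inv_comp_eq]
    exact h.isoPullback_hom_fst.symm
  have h3 := congrArg (fun g : pullback (A1 V ↘ V) U.ι ⟶ A1 V => g.base z) this
  simp only [Scheme.Hom.comp_apply] at h3 ⊢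
  rw [h3]
  exact hz1

theorem gammaInj (U : Scheme.{u}) [IsAffine U]
    (hn : ∀ n : ℕ, n ≠ 0 → IsUnit (n : Γ(U, ⊤)))
    (w w' : Γ(A1 U, ⊤))
    (h : ∀ n : ℕ, (sigmaC U (n : Γ(U, ⊤))).appTop w = (sigmaC U (n : Γ(U, ⊤))).appTop w') :
    w = w' := by
  classical
  set M := CommRingCat.of (MvPolynomial PUnit.{u+1} Γ(U, ⊤)) with hM
  set e := AffineSpace.isoOfIsAffine PUnit.{u+1} U with he
  have hsurj : Function.Surjective (e.hom.appTop) := by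
    intro x
    refine ⟨e.inv.appTop x, ?_⟩
    rw [← CommRingCat.comp_apply, ← Scheme.Hom.comp_appTop, e.hom_inv_id, Scheme.Hom.id_appTop]
    rfl
  have hΦ : ∀ (p : MvPolynomial PUnit.{u+1} Γ(U, ⊤)) (c : Γ(U, ⊤)),
      (sigmaC U c).appTop (e.hom.appTop ((Scheme.ΓSpecIso M).inv (p : M)))
      = MvPolynomial.eval (fun _ => c) p := by
    intro p c
    have h1 : e.hom.appTop ((Scheme.ΓSpecIso M).inv p)
        = MvPolynomial.eval₂ ((A1 U ↘ U).appTop.hom)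
            (AffineSpace.coord U) p := by
      rw [he, AffineSpace.isoOfIsAffine_hom_appTop, CommRingCat.comp_apply]
      erw [Iso.inv_hom_id_apply]
      rfl
    rw [h1]
    have h4 : (A1 U ↘ U).appTop ≫ (sigmaC U c).appTop = 𝟙 _ := by
      rw [← Scheme.Hom.comp_appTop, sigmaC_over, Scheme.Hom.id_appTop]
    have h2 : (sigmaC U c).appTop.hom.comp
        ((A1 U ↘ U).appTop.hom) = RingHom.id _ := by
      ext r
      rw [RingHom.comp_apply, RingHom.id_apply, ← CommRingCat.comp_apply, h4]
      rfl
    rw [MvPolynomial.eval₂_comp_left (sigmaC U c).appTop.hom, h2]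
    have h5 : (⇑(sigmaC U c).appTop ∘ AffineSpace.coord U) = fun _ => c := by
      funext i
      exact sigmaC_coord U c i
    rw [h5, MvPolynomial.eval₂_id]
  obtain ⟨w₁, rfl⟩ := hsurj w
  obtain ⟨w₂, rfl⟩ := hsurj w'
  obtain ⟨p, hp⟩ := (Scheme.ΓSpecIso M).commRingCatIsoToRingEquiv.symm.surjective w₁
  obtain ⟨p', hp'⟩ := (Scheme.ΓSpecIso M).commRingCatIsoToRingEquiv.symm.surjective w₂
  have hpq : (Scheme.ΓSpecIso M).commRingCatIsoToRingEquiv.symm p = (Scheme.ΓSpecIso M).inv p :=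
    rfl
  have hpq' : (Scheme.ΓSpecIso M).commRingCatIsoToRingEquiv.symm p' = (Scheme.ΓSpecIso M).inv p' :=
    rfl
  rw [hpq] at hp; rw [hpq'] at hp'
  subst hp hp'
  have hpp : p = p' := by
    refine mv_eval_nat_inj hn p p' ?_
    intro n
    have := h n
    rw [hΦ p, hΦ p'] at this
    exact this
  rw [hpp]

/-- Every positive natural number is invertible in the functions on a scheme over a
field of characteristic zero. -/
lemma natUnits {k : Type u} [Field k] [CharZero k] {S : Scheme.{u}} (sk : S ⟶ SpecOf k)
    {T : Scheme.{u}} (f : T ⟶ S) (n : ℕ) (hn : n ≠ 0) : IsUnit (n : Γ(T, ⊤)) := by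
  let κ : k →+* Γ(T, ⊤) :=
    ((f ≫ sk).appTop : Γ(SpecOf k, ⊤) ⟶ Γ(T, ⊤)).hom.comp
      ((Scheme.ΓSpecIso (CommRingCat.of k)).inv : CommRingCat.of k ⟶ Γ(SpecOf k, ⊤)).hom
  have h1 : (n : Γ(T, ⊤)) = κ (n : k) := (map_natCast κ n).symm
  rw [h1]
  exact (IsUnit.mk0 (n : k) (Nat.cast_ne_zero.mpr hn)).map κ

variable {S : Scheme.{u}}

/-- The affine line over an object of `𝒳/S`, as an object of `𝒳/S`. -/
noncomputable abbrev lineOver (A : Over S) : Over S :=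
  { left := A1 A.left, right := ⟨⟨⟩⟩, hom := (A1 A.left ↘ A.left) ≫ A.hom }

/-- The projection from the affine line. -/
noncomputable def linePi (A : Over S) : lineOver A ⟶ A := Over.homMk (A1 A.left ↘ A.left) rfl

/-- The coordinate function on the affine line. -/
noncomputable def lineTau (A : Over S) : Osec (lineOver A) := AffineSpace.coord A.left PUnit.unit

/-- The constant section of the affine line given by a function on the base. -/
noncomputable def lineSig (A : Over S) (c : Osec A) : A ⟶ lineOver A :=
  Over.homMk (sigmaC A.left c) (by
    show sigmaC A.left c ≫ (A1 A.left ↘ A.left) ≫ A.hom = A.hom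
    rw [← Category.assoc, sigmaC_over A.left c, Category.id_comp])

@[simp] lemma lineSig_pi (A : Over S) (c : Osec A) : lineSig A c ≫ linePi A = 𝟙 A := by
  apply Over.OverMorphism.ext
  show sigmaC A.left c ≫ (A1 A.left ↘ A.left) = 𝟙 A.left
  exact sigmaC_over _ _

@[simp] lemma lineSig_tau (A : Over S) (c : Osec A) :
    Ores (lineSig A c).op (lineTau A) = c := by
  show Scheme.Γ.map ((lineSig A c).left.op) (lineTau A) = c
  rw [Scheme.Γ_map_op]
  exact sigmaC_coord A.left c PUnit.unit


/-- Sections of a representable sheaf over the affine line are determined by their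
values at the natural-number constant sections. -/
theorem repInj {k : Type u} [Field k] [CharZero k] (sk : S ⟶ SpecOf k)
    (G' : PSh S) (hsheaf : IsEtaleSheaf G') (Z : Over S) (hZaff : IsAffineHom Z.hom)
    (e : G' ≅ ySh Z) (A : Over S) (y y' : G'.obj (op (lineOver A)))
    (h : ∀ n : ℕ, G'.map (lineSig A (n : Osec A)).op y = G'.map (lineSig A (n : Osec A)).op y') :
    y = y' := by
  classical
  haveI := hZaff
  set f : lineOver A ⟶ Z := e.hom.app (op (lineOver A)) y with hfdef
  set g : lineOver A ⟶ Z := e.hom.app (op (lineOver A)) y' with hgdef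
  have einj : ∀ (B : (Over S)ᵒᵖ), Function.Injective (e.hom.app B) := by
    intro B a b hab
    have h2 := congrArg (e.inv.app B) hab
    simpa using h2
  have enat : ∀ {B C : Over S} (φ : B ⟶ C) (w : G'.obj (op C)),
      e.hom.app (op B) (G'.map φ.op w) = φ ≫ e.hom.app (op C) w := by
    intro B C φ w
    exact FunctorToTypes.naturality e.hom φ.op w
  have hn : ∀ n : ℕ, lineSig A (n : Osec A) ≫ f = lineSig A (n : Osec A) ≫ g := by
    intro n
    rw [hfdef, hgdef, ← enat, ← enat, h n]
  -- the covering pieces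
  let idx : Type u :=
    { U : A.left.Opens // IsAffineOpen U ∧ ∃ V : S.Opens, IsAffineOpen V ∧ U ≤ A.hom ⁻¹ᵁ V }
  let pObj : idx → Over S := fun i =>
    Over.mk ((A1 i.1.toScheme ↘ i.1.toScheme) ≫ i.1.ι ≫ A.hom)
  have wMor : ∀ i : idx, AffineSpace.map PUnit.{u+1} i.1.ι ≫ (lineOver A).hom
      = (A1 i.1.toScheme ↘ i.1.toScheme) ≫ i.1.ι ≫ A.hom := by
    intro i
    show AffineSpace.map PUnit.{u+1} i.1.ι ≫ (A1 A.left ↘ A.left) ≫ A.hom = _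
    rw [← Category.assoc, AffineSpace.map_over, Category.assoc]
  let pMor : ∀ i : idx, pObj i ⟶ lineOver A := fun i =>
    Over.homMk (AffineSpace.map PUnit.{u+1} i.1.ι) (wMor i)
  -- the claim on each piece
  have claim : ∀ i : idx, G'.map (pMor i).op y = G'.map (pMor i).op y' := by
    intro i
    obtain ⟨U, hU, V, hV, hUV⟩ := i
    haveI : IsAffine U.toScheme := hU
    apply einj
    rw [enat, enat, ← hfdef, ← hgdef]
    apply Over.OverMorphism.ext
    show AffineSpace.map PUnit.{u+1} U.ι ≫ f.left = AffineSpace.map PUnit.{u+1} U.ι ≫ g.left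
    set m := AffineSpace.map PUnit.{u+1} U.ι with hm
    set W : Z.left.Opens := Z.hom ⁻¹ᵁ V with hWdef
    haveI : IsAffine W.toScheme := hV.preimage Z.hom
    have hrange : ∀ l : lineOver A ⟶ Z,
        Set.range (m ≫ l.left).base ⊆ Set.range W.ι.base := by
      intro l
      rintro _ ⟨p, rfl⟩
      rw [Scheme.Opens.range_ι]
      show Z.hom.base ((m ≫ l.left).base p) ∈ V
      have hcomp : (m ≫ l.left) ≫ Z.hom
          = (A1 U.toScheme ↘ U.toScheme) ≫ U.ι ≫ A.hom := by
        rw [Category.assoc, Over.w l, hm, wMor ⟨U, hU, V, hV, hUV⟩]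
      have hbase : Z.hom.base ((m ≫ l.left).base p) = ((m ≫ l.left) ≫ Z.hom).base p :=
        (Scheme.Hom.comp_apply _ _ _).symm
      rw [hbase, hcomp]
      have hmem : U.ι.base ((A1 U.toScheme ↘ U.toScheme).base p) ∈ U := by
        have : U.ι.base ((A1 U.toScheme ↘ U.toScheme).base p) ∈ Set.range U.ι.base :=
          Set.mem_range_self _
        rwa [Scheme.Opens.range_ι] at this
      have h6 := hUV hmem
      rw [Scheme.Hom.comp_apply, Scheme.Hom.comp_apply]
      exact h6
    set f₂ := IsOpenImmersion.lift W.ι (m ≫ f.left) (hrange f) with hf₂def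
    set g₂ := IsOpenImmersion.lift W.ι (m ≫ g.left) (hrange g) with hg₂def
    have hf₂ : f₂ ≫ W.ι = m ≫ f.left := IsOpenImmersion.lift_fac _ _ _
    have hg₂ : g₂ ≫ W.ι = m ≫ g.left := IsOpenImmersion.lift_fac _ _ _
    -- compatibility of the constant sections with the open piece
    have compat : ∀ n : ℕ, sigmaC U.toScheme ((n : Γ(U.toScheme, ⊤))) ≫ m
        = U.ι ≫ (lineSig A (n : Osec A)).left := by
      intro n
      apply AffineSpace.hom_ext
      · rw [Category.assoc, hm, AffineSpace.map_over, ← Category.assoc]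
        show (sigmaC U.toScheme _ ≫ (A1 U.toScheme ↘ U.toScheme)) ≫ U.ι = _
        rw [sigmaC_over, Category.id_comp]
        show U.ι = U.ι ≫ sigmaC A.left (n : Osec A) ≫ (A1 A.left ↘ A.left)
        rw [sigmaC_over A.left (n : Osec A), Category.comp_id]
      · intro j
        rw [Scheme.Hom.comp_appTop, Scheme.Hom.comp_appTop, CommRingCat.comp_apply,
          CommRingCat.comp_apply]
        show (sigmaC U.toScheme _).appTop (m.appTop (AffineSpace.coord A.left j))
          = U.ι.appTop ((sigmaC A.left (n : Osec A)).appTop (AffineSpace.coord A.left j))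
        rw [hm, AffineSpace.map_appTop_coord, sigmaC_coord, sigmaC_coord A.left (n : Osec A)]
        exact (map_natCast U.ι.appTop.hom n).symm
    have hσ : ∀ n : ℕ, sigmaC U.toScheme ((n : Γ(U.toScheme, ⊤))) ≫ f₂
        = sigmaC U.toScheme ((n : Γ(U.toScheme, ⊤))) ≫ g₂ := by
      intro n
      have h3 := hn n
      have hlft : (lineSig A (n : Osec A)).left ≫ f.left
          = (lineSig A (n : Osec A)).left ≫ g.left := by
        have := congrArg CommaMorphism.left h3
        simpa using this
      apply (cancel_mono W.ι).mp
      rw [Category.assoc, Category.assoc, hf₂, hg₂, ← Category.assoc, compat n,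
        ← Category.assoc, compat n, Category.assoc, Category.assoc, hlft]
    have hfg₂ : f₂ = g₂ := by
      apply ext_of_isAffine
      apply CommRingCat.hom_ext
      apply RingHom.ext
      intro z
      apply gammaInj U.toScheme (fun n hn0 => natUnits sk (U.ι ≫ A.hom) n hn0)
      intro n
      have h4 := congrArg Scheme.Hom.appTop (hσ n)
      rw [Scheme.Hom.comp_appTop, Scheme.Hom.comp_appTop] at h4
      have h5 := ConcreteCategory.congr_hom h4 z
      rw [CommRingCat.comp_apply, CommRingCat.comp_apply] at h5
      exact h5
    rw [← hf₂, ← hg₂, hfg₂]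
  -- assemble via the sheaf property
  set R : Sieve (lineOver A) := Sieve.generate (Presieve.ofArrows pObj pMor) with hR
  have hRcov : EtCov R := by
    refine ⟨idx, pObj, pMor, ?_, ?_, ?_⟩
    · intro i
      show Etale (AffineSpace.map PUnit.{u+1} i.1.ι)
      haveI := isOpenImmersion_A1_map (i.1.ι)
      infer_instance
    · intro b
      set a := (A1 A.left ↘ A.left).base b with ha
      obtain ⟨V, hV, hsV, -⟩ := TopologicalSpace.Opens.isBasis_iff_nbhd.mp
        S.isBasis_affineOpens (show A.hom.base a ∈ (⊤ : S.Opens) from trivial)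
      obtain ⟨U, hU, haU, hUle⟩ := TopologicalSpace.Opens.isBasis_iff_nbhd.mp
        A.left.isBasis_affineOpens (show a ∈ A.hom ⁻¹ᵁ V from hsV)
      obtain ⟨z, hz⟩ := exists_A1_map_preimage U b haU
      exact ⟨⟨U, hU, V, hV, hUle⟩, z, hz⟩
    · intro i
      exact ⟨pObj i, 𝟙 _, pMor i, Presieve.ofArrows.mk i, Category.id_comp _⟩
  apply (hsheaf R hRcov).isSeparatedFor.ext
  rintro W' φ ⟨Q, ψ, ρ, hρ, rfl⟩
  cases hρ with
  | mk i =>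
    rw [op_comp, FunctorToTypes.map_comp_apply, FunctorToTypes.map_comp_apply, claim i]


lemma smul_natCast {F : (Over S)ᵒᵖ ⥤ AddCommGrpCat.{u}} (m : OModuleStr F)
    (A : (Over S)ᵒᵖ) (n : ℕ) (x : F.obj A) :
    m.smul A ((n : ℕ) : Osec A.unop) x = n • x := by
  induction n with
  | zero =>
    rw [Nat.cast_zero, zero_smul]
    have h := m.add_smul A 0 0 x
    rw [add_zero] at h
    exact (add_eq_left.mp h.symm)
  | succ n ih =>
    rw [Nat.cast_succ, m.add_smul, ih, m.one_smul, succ_nsmul]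

lemma smul_tau_res {F : (Over S)ᵒᵖ ⥤ AddCommGrpCat.{u}} (m : OModuleStr F)
    (A₀ : Over S) (c : Osec A₀) (x : F.obj (op A₀)) :
    F.map (lineSig A₀ c).op
      (m.smul (op (lineOver A₀)) (lineTau A₀) (F.map (linePi A₀).op x))
      = m.smul (op A₀) c x := by
  rw [m.nat (lineSig A₀ c).op (lineTau A₀) (F.map (linePi A₀).op x)]
  rw [lineSig_tau]
  congr 1
  rw [← CategoryTheory.comp_apply, ← F.map_comp, ← op_comp, lineSig_pi, op_id, F.map_id]
  rfl

theorem key {k : Type u} [Field k] [CharZero k] (sk : S ⟶ SpecOf k)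
    (F G : (Over S)ᵒᵖ ⥤ AddCommGrpCat.{u})
    (hGsheaf : IsEtaleSheaf (G ⋙ forget AddCommGrpCat))
    (Z : Over S) (hZaff : IsAffineHom Z.hom) (e : (G ⋙ forget AddCommGrpCat) ≅ ySh Z)
    (a : F ⟶ G) (mF : OModuleStr F) (mG : OModuleStr G) :
    ∀ (A : (Over S)ᵒᵖ) (r : Osec A.unop) (x : F.obj A),
      a.app A (mF.smul A r x) = mG.smul A r (a.app A x) := by
  rintro ⟨A₀⟩ r x
  have anat : ∀ {P Q : (Over S)ᵒᵖ} (φ : P ⟶ Q) (w : F.obj P),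
      a.app Q (F.map φ w) = G.map φ (a.app P w) := by
    intro P Q φ w
    have h2 := congrArg (fun (t : F.obj P ⟶ G.obj Q) => t w) (a.naturality φ)
    exact h2
  set B := lineOver A₀ with hB
  set τ := lineTau A₀ with hτ
  set uu : F.obj (op B) := mF.smul (op B) τ (F.map (linePi A₀).op x) with huu
  set vv : G.obj (op B) := mG.smul (op B) τ (G.map (linePi A₀).op (a.app (op A₀) x)) with hvv
  have h1 : ∀ n : ℕ, G.map (lineSig A₀ ((n : ℕ) : Osec A₀)).op (a.app (op B) uu)
      = G.map (lineSig A₀ ((n : ℕ) : Osec A₀)).op vv := by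
    intro n
    rw [← anat, huu, smul_tau_res mF A₀ ((n : ℕ) : Osec A₀) x, smul_natCast,
      map_nsmul, hvv, smul_tau_res mG A₀ ((n : ℕ) : Osec A₀) (a.app (op A₀) x), smul_natCast]
  have h2 : a.app (op B) uu = vv :=
    repInj sk (G ⋙ forget AddCommGrpCat) hGsheaf Z hZaff e A₀ (a.app (op B) uu) vv h1
  have h3 := congrArg (G.map (lineSig A₀ r).op) h2
  rw [← anat, huu, smul_tau_res mF A₀ r x, hvv, smul_tau_res mG A₀ r (a.app (op A₀) x)] at h3
  exact h3


/-- Two `O`-module structures with the same scalar multiplication are equal. -/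
lemma OModuleStr.ext_smul {F : (Over S)ᵒᵖ ⥤ AddCommGrpCat.{u}} {m m' : OModuleStr F}
    (h : m.smul = m'.smul) : m = m' := by
  cases m; cases m'; cases h; rfl

/-- Lemma I.a.  If `F` is a sheaf of abelian groups on `𝒳/S`
representable by a scheme affine of finite type over `S`, then an `O`-module structure
on `F`, if it exists, is unique; and any morphism of sheaves of abelian groups between
two such sheaves is automatically `O`-linear. -/
theorem omodule_structure_unique
    (k : Type u) [Field k] [CharZero k] [Uncountable k]
    (S : Scheme.{u}) (sk : S ⟶ SpecOf k)
    (F G : (Over S)ᵒᵖ ⥤ AddCommGrpCat.{u})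
    (hFsheaf : IsEtaleSheaf (F ⋙ forget AddCommGrpCat))
    (hGsheaf : IsEtaleSheaf (G ⋙ forget AddCommGrpCat))
    (hFrep : ∃ X : Over S, IsAffineHom X.hom ∧ FinTypeMor X.hom ∧
      Nonempty ((F ⋙ forget AddCommGrpCat) ≅ ySh X))
    (hGrep : ∃ X : Over S, IsAffineHom X.hom ∧ FinTypeMor X.hom ∧
      Nonempty ((G ⋙ forget AddCommGrpCat) ≅ ySh X)) :
    (∀ m m' : OModuleStr F, m = m') ∧
    (∀ (a : F ⟶ G) (mF : OModuleStr F) (mG : OModuleStr G)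
      (A : (Over S)ᵒᵖ) (r : Osec A.unop) (x : F.obj A),
        a.app A (mF.smul A r x) = mG.smul A r (a.app A x)) := by
  obtain ⟨ZF, hZFaff, -, ⟨eF⟩⟩ := hFrep
  obtain ⟨ZG, hZGaff, -, ⟨eG⟩⟩ := hGrep
  constructor
  · intro m m'
    apply OModuleStr.ext_smul
    funext A r x
    have h := key sk F F hFsheaf ZF hZFaff eF (𝟙 F) m m' A r x
    simpa using h
  · intro a mF mG A r x
    exact key sk F G hGsheaf ZG hZGaff eG a mF mG A r x

end Simpson
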